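/- arXiv:2108.02194 — 2 statements merged into one kernel-verified Lean document; each statement's English description precedes it below -/
import Mathlib

section
/- The function t ↦ log(1 - e^t + e^{2t} + e^{3t}) is convex on the interval [0, ∞). -/
/-!
With `u = exp t`, the function inside the logarithm is `φ = 1 - u + u² + u³`, and
differentiating in `t` multiplies each `uᵏ` by `k`. A positive function has a convex logarithm
as soon as `φ'² ≤ φ φ''`, and here `φ φ'' - φ'² = u ((u² - 2u)² + 4u² + 4u - 1)`, which is
positive for `u ≥ 1`, i.e. for `t ≥ 0`.
-/

open Real Set

theorem convexOn_log_of_sq_deriv_le_mul_deriv2 {D : Set ℝ} (hD : Convex ℝ D)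
    {f f' f'' : ℝ → ℝ} (hpos : ∀ x ∈ D, 0 < f x) (hf : ContinuousOn f D)
    (hf' : ∀ x ∈ interior D, HasDerivAt f (f' x) x)
    (hf'' : ∀ x ∈ interior D, HasDerivAt f' (f'' x) x)
    (hineq : ∀ x ∈ interior D, f' x ^ 2 ≤ f x * f'' x) :
    ConvexOn ℝ D fun x => log (f x) := by
  have hne : ∀ x ∈ interior D, f x ≠ 0 := fun x hx => (hpos x (interior_subset hx)).ne'
  refine convexOn_of_hasDerivWithinAt2_nonneg (f' := fun x => f' x / f x)
    (f'' := fun x => (f'' x * f x - f' x * f' x) / f x ^ 2) hD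
    (hf.log fun x hx => (hpos x hx).ne') (fun x hx => ?_) (fun x hx => ?_) (fun x hx => ?_)
  · exact ((hf' x hx).log (hne x hx)).hasDerivWithinAt
  · exact ((hf'' x hx).div (hf' x hx) (hne x hx)).hasDerivWithinAt
  · have := hineq x hx
    exact div_nonneg (by nlinarith) (sq_nonneg _)

theorem hasDerivAt_exp_const_mul (c t : ℝ) :
    HasDerivAt (fun s => exp (c * s)) (c * exp (c * t)) t := by
  simpa [mul_comm] using ((hasDerivAt_id t).const_mul c).exp

theorem hasDerivAt_one_sub_exp_add_exp_two_mul_add_exp_three_mul (t : ℝ) :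
    HasDerivAt (fun s => 1 - exp s + exp (2 * s) + exp (3 * s))
      (-exp t + 2 * exp (2 * t) + 3 * exp (3 * t)) t := by
  refine ((((hasDerivAt_const t (1 : ℝ)).sub (hasDerivAt_exp t)).add
    (hasDerivAt_exp_const_mul 2 t)).add (hasDerivAt_exp_const_mul 3 t)).congr_deriv ?_
  ring

theorem hasDerivAt_neg_exp_add_two_mul_exp_two_mul_add_three_mul_exp_three_mul (t : ℝ) :
    HasDerivAt (fun s => -exp s + 2 * exp (2 * s) + 3 * exp (3 * s))
      (-exp t + 4 * exp (2 * t) + 9 * exp (3 * t)) t := by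
  refine (((hasDerivAt_exp t).neg.add ((hasDerivAt_exp_const_mul 2 t).const_mul 2)).add
    ((hasDerivAt_exp_const_mul 3 t).const_mul 3)).congr_deriv ?_
  ring

theorem one_sub_add_sq_add_cube_pos {u : ℝ} (hu : 0 ≤ u) : 0 < 1 - u + u ^ 2 + u ^ 3 := by
  nlinarith [sq_nonneg (u - 1), pow_nonneg hu 3]

theorem sq_le_one_sub_add_sq_add_cube_mul {u : ℝ} (hu : 1 ≤ u) :
    (-u + 2 * u ^ 2 + 3 * u ^ 3) ^ 2 ≤ (1 - u + u ^ 2 + u ^ 3) * (-u + 4 * u ^ 2 + 9 * u ^ 3) := by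
  have hdiff : (1 - u + u ^ 2 + u ^ 3) * (-u + 4 * u ^ 2 + 9 * u ^ 3)
      - (-u + 2 * u ^ 2 + 3 * u ^ 3) ^ 2 = u * ((u ^ 2 - 2 * u) ^ 2 + 4 * u ^ 2 + 4 * u - 1) := by
    ring
  have hfactor : 0 ≤ (u ^ 2 - 2 * u) ^ 2 + 4 * u ^ 2 + 4 * u - 1 := by
    nlinarith [sq_nonneg (u ^ 2 - 2 * u)]
  rw [← sub_nonneg, hdiff]
  exact mul_nonneg (by linarith) hfactor

theorem stmt_3 :
    ConvexOn ℝ (Set.Ici (0 : ℝ))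
      (fun t : ℝ => Real.log (1 - Real.exp t + Real.exp (2*t) + Real.exp (3*t))) := by
  have hpow (t : ℝ) : exp (2 * t) = exp t ^ 2 ∧ exp (3 * t) = exp t ^ 3 :=
    ⟨mod_cast exp_nat_mul t 2, mod_cast exp_nat_mul t 3⟩
  refine convexOn_log_of_sq_deriv_le_mul_deriv2 (convex_Ici 0) (fun t _ => ?_)
    (by fun_prop) (fun t _ => hasDerivAt_one_sub_exp_add_exp_two_mul_add_exp_three_mul t)
    (fun t _ => hasDerivAt_neg_exp_add_two_mul_exp_two_mul_add_three_mul_exp_three_mul t)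
    (fun t ht => ?_)
  · rw [(hpow t).1, (hpow t).2]
    exact one_sub_add_sq_add_cube_pos (exp_pos t).le
  · rw [interior_Ici, mem_Ioi] at ht
    rw [(hpow t).1, (hpow t).2]
    exact sq_le_one_sub_add_sq_add_cube_mul (one_le_exp ht.le)
end

section
/- For all real t ≥ 0, φ''(t)·φ(t) - φ'(t)² ≥ 0, where φ(t) = 1 - e^t + e^{2t} + e^{3t}. -/
/-! Writing `x = eᵗ`, every derivative of `t ↦ p(eᵗ)` is again a polynomial in `eᵗ`, since
`d/dt p(eᵗ) = (X · p')(eᵗ)`. For `φ` this gives `φ''φ - φ'² = x (x²(x - 2)² + 4x² + 4x - 1)`,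
which is positive for `x ≥ 1`, i.e. for `t ≥ 0`. -/

open Polynomial Real

theorem hasDerivAt_eval_exp (p : ℝ[X]) (t : ℝ) :
    HasDerivAt (fun s => p.eval (exp s)) ((X * derivative p).eval (exp t)) t := by
  rw [eval_mul, eval_X, mul_comm]
  exact (p.hasDerivAt (exp t)).comp t (hasDerivAt_exp t)

theorem deriv_eval_exp (p : ℝ[X]) :
    deriv (fun s => p.eval (exp s)) = fun s => (X * derivative p).eval (exp s) :=
  funext fun t => (hasDerivAt_eval_exp p t).deriv

theorem mul_sub_sq_nonneg_of_one_le {x : ℝ} (hx : 1 ≤ x) :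
    0 ≤ (-x + 4 * x ^ 2 + 9 * x ^ 3) * (1 - x + x ^ 2 + x ^ 3) - (-x + 2 * x ^ 2 + 3 * x ^ 3) ^ 2 := by
  have h : (-x + 4 * x ^ 2 + 9 * x ^ 3) * (1 - x + x ^ 2 + x ^ 3) - (-x + 2 * x ^ 2 + 3 * x ^ 3) ^ 2
      = x * (x ^ 2 * (x - 2) ^ 2 + 4 * x ^ 2 + 4 * x - 1) := by ring
  rw [h]
  exact mul_nonneg (by linarith) (by nlinarith [sq_nonneg (x * (x - 2))])

theorem stmt_4 (φ : ℝ → ℝ)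
    (hφ : φ = fun t : ℝ => 1 - Real.exp t + Real.exp (2*t) + Real.exp (3*t))
    (t : ℝ) (ht : 0 ≤ t) :
    0 ≤ deriv (deriv φ) t * φ t - (deriv φ t)^2 := by
  have hφ_eval : φ = fun s => (1 - X + X ^ 2 + X ^ 3 : ℝ[X]).eval (exp s) := by
    simp only [hφ, eval_add, eval_sub, eval_one, eval_X, eval_pow, ← exp_nat_mul]
    norm_num
  rw [hφ_eval, deriv_eval_exp, deriv_eval_exp]
  convert mul_sub_sq_nonneg_of_one_le (one_le_exp ht) using 1
  simp only [map_add, map_sub, map_zero, derivative_one, derivative_X, derivative_X_pow, derivative_mul, eval_add,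
    eval_sub, eval_mul, eval_one, eval_zero, eval_X, eval_pow, eval_C, derivative_C]
  ring
end
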